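/- arXiv:2206.14277 — 2 statements merged into one kernel-verified Lean document; each statement's English description precedes it below -/
import Mathlib

section
/- For every j ∈ ℤ/Nℤ the following hold: [e_j, q_-^1] = (−1)^j·(−q_j^2 + q_{j−1}^2); [e_j, q_-^2] = (−1)^j·(−q_j^3 − q_{j−2}^3 − 4·q_j^1); and for every m with 3 ≤ m ≤ N − 2, [e_j, q_-^m] = (−1)^j·(−q_j^{m+1} − (−1)^m·q_{j−m}^{m+1} − q_j^{m−1} − (−1)^m·q_{j−m+2}^{m−1}). -/
/-!
Since `N` is even, `i ↦ (-1) ^ i` is a character of `ℤ/Nℤ`. The commutator `[e_j, q_i^m]`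
vanishes unless `e_j` lies in or next to the string `e_i, …, e_{i+m-1}`, so `[e_j, q_-^m]` is a
signed sum over the `m + 2` strings `q_{j+1-t}^m`, `t ≤ m + 1`. In each of them, generators that
commute with `e_j` are peeled off by the Leibniz rule, from the left via the defining recursion and
from the right via the mirrored recursion `q_i^{m+1} = [q_i^m, e_{i+m}]`. This reduces everything
to strings of length 2 and 3 starting at `e_j` or `e_{j-1}`, where `e_j² = 0` and `e_j e_{j±1} e_j = e_j`
give `[e_j, q_j^2] = -2 e_j`, `[e_j, q_{j-1}^2] = 2 e_j` and
`[e_j, q_{j-1}^3] = q_j^2 - q_{j-1}^2`. For `m ≥ 3` only the strings containing `e_j` at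
positions `-1`, `1`, `m - 2` and `m` survive.
-/

/-- Commutator `[x, y] = x*y - y*x` in a (not necessarily unital) ring. -/
def cm {A : Type*} [NonUnitalRing A] (x y : A) : A := x * y - y * x

/-- Right-nested iterated commutator `q_i^m = [e_i, [e_{i+1}, ⋯, [e_{i+m-2}, e_{i+m-1}]⋯]]`
(indices mod `N`). -/
def qq {A : Type*} [NonUnitalRing A] {N : ℕ} (e : ZMod N → A) : ℕ → ZMod N → A
  | 0, _ => 0
  | 1, i => e i
  | (m + 2), i => cm (e i) (qq e (m + 1) (i + 1))

/-- `q_+^m = Σ_{i=0}^{N-1} q_i^m`. -/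
def qplus {A : Type*} [NonUnitalRing A] {N : ℕ} (e : ZMod N → A) (m : ℕ) : A :=
  ∑ i ∈ Finset.range N, qq e m (i : ZMod N)

/-- `q_-^m = Σ_{i=0}^{N-1} (-1)^i q_i^m`. -/
def qminus {A : Type*} [NonUnitalRing A] {N : ℕ} (e : ZMod N → A) (m : ℕ) : A :=
  ∑ i ∈ Finset.range N, ((-1 : ℤ) ^ i) • qq e m (i : ZMod N)

/-- `q_e^m = Σ_{i even} q_i^m` (sum over `0 ≤ i < N`). -/
def qev {A : Type*} [NonUnitalRing A] {N : ℕ} (e : ZMod N → A) (m : ℕ) : A :=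
  ∑ i ∈ Finset.range N, if Even i then qq e m (i : ZMod N) else 0

/-- `q_o^m = Σ_{i odd} q_i^m` (sum over `0 ≤ i < N`). -/
def qod {A : Type*} [NonUnitalRing A] {N : ℕ} (e : ZMod N → A) (m : ℕ) : A :=
  ∑ i ∈ Finset.range N, if Odd i then qq e m (i : ZMod N) else 0

open Finset

section Commutator

variable {A : Type*} [NonUnitalRing A]

theorem cm_self (a : A) : cm a a = 0 := sub_self _

theorem cm_zero_left (a : A) : cm 0 a = 0 := by simp [cm]

theorem cm_zero_right (a : A) : cm a 0 = 0 := by simp [cm]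

theorem cm_swap (a b : A) : cm a b = -cm b a := by simp [cm]

theorem cm_sub_left (a b c : A) : cm (a - b) c = cm a c - cm b c := by
  simp only [cm, sub_mul, mul_sub]; abel

theorem cm_sub_right (a b c : A) : cm a (b - c) = cm a b - cm a c := by
  simp only [cm, sub_mul, mul_sub]; abel

theorem cm_neg_right (a b : A) : cm a (-b) = -cm a b := by
  simp only [cm, mul_neg, neg_mul]; abel

theorem cm_zsmul_left (n : ℤ) (a b : A) : cm (n • a) b = n • cm a b := by
  simp [cm, smul_mul_assoc, mul_smul_comm, smul_sub]

theorem cm_zsmul_right (n : ℤ) (a b : A) : cm a (n • b) = n • cm a b := by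
  simp [cm, smul_mul_assoc, mul_smul_comm, smul_sub]

theorem cm_sum_right {ι : Type*} (a : A) (s : Finset ι) (f : ι → A) :
    cm a (∑ i ∈ s, f i) = ∑ i ∈ s, cm a (f i) := by
  simp [cm, mul_sum, sum_mul, ← sum_sub_distrib]

theorem cm_leibniz (a b c : A) : cm a (cm b c) = cm (cm a b) c + cm b (cm a c) := by
  simp only [cm, mul_sub, sub_mul, mul_assoc]; abel

theorem cm_cm_of_mul_mul_self {b c : A} (hbb : b * b = 0) (hbcb : b * c * b = b) :
    cm b (cm b c) = (-2 : ℤ) • b := by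
  have hcbb : c * b * b = 0 := by rw [mul_assoc, hbb, mul_zero]
  simp only [cm, mul_sub, sub_mul, ← mul_assoc]
  rw [hbb, zero_mul, hbcb, hcbb]
  abel

theorem cm_cm_cm_of_mul_mul_self {a b c : A} (hbb : b * b = 0) (hbab : b * a * b = b)
    (hbcb : b * c * b = b) (hac : a * c = c * a) :
    cm b (cm a (cm b c)) = cm b c - cm a b := by
  have hbbx : ∀ x, b * (b * x) = 0 := fun x => by rw [← mul_assoc, hbb, zero_mul]
  have hbabx : ∀ x, b * (a * (b * x)) = b * x := fun x => by
    rw [← mul_assoc, ← mul_assoc, hbab]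
  have hbcbx : ∀ x, b * (c * (b * x)) = b * x := fun x => by
    rw [← mul_assoc, ← mul_assoc, hbcb]
  have hacx : ∀ x, a * (c * x) = c * (a * x) := fun x => by
    rw [← mul_assoc, hac, mul_assoc]
  rw [mul_assoc] at hbab hbcb
  simp only [cm, mul_sub, sub_mul, mul_assoc]
  simp only [hbb, hbbx, hbab, hbabx, hbcb, hbcbx, hacx, mul_zero]
  abel

end Commutator

section Sign

variable {N : ℕ}

theorem neg_one_pow_val_natCast (hNe : Even N) (t : ℕ) :
    (-1 : ℤ) ^ (t : ZMod N).val = (-1) ^ t := by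
  rw [ZMod.val_natCast, neg_one_pow_eq_pow_mod_two, Nat.mod_mod_of_dvd _ hNe.two_dvd,
    ← neg_one_pow_eq_pow_mod_two]

theorem neg_one_pow_val_add [NeZero N] (hNe : Even N) (x y : ZMod N) :
    (-1 : ℤ) ^ (x + y).val = (-1) ^ x.val * (-1) ^ y.val := by
  rw [ZMod.val_add, neg_one_pow_eq_pow_mod_two, Nat.mod_mod_of_dvd _ hNe.two_dvd,
    ← neg_one_pow_eq_pow_mod_two, pow_add]

theorem neg_one_pow_val_sub [NeZero N] (hNe : Even N) (x y : ZMod N) :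
    (-1 : ℤ) ^ (x - y).val = (-1) ^ x.val * (-1) ^ y.val := by
  have h := neg_one_pow_val_add hNe (x - y) y
  rw [sub_add_cancel] at h
  rw [h, mul_assoc, ← pow_add, ← two_mul, pow_mul, neg_one_sq, one_pow, mul_one]

end Sign

theorem natCast_ne_zero_of_lt {N a : ℕ} (ha : 0 < a) (haN : a < N) : (a : ZMod N) ≠ 0 := by
  rw [Ne, ZMod.natCast_eq_zero_iff]
  exact fun h => (Nat.le_of_dvd ha h).not_gt haN

theorem sum_range_natCast_eq_sum_univ {M : Type*} [AddCommMonoid M] (N : ℕ) [NeZero N]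
    (f : ZMod N → M) : ∑ i ∈ range N, f i = ∑ x, f x :=
  sum_nbij' (fun i => (i : ZMod N)) ZMod.val (by simp) (by simp [ZMod.val_lt])
    (fun _ hi => ZMod.val_cast_of_lt (mem_range.1 hi)) (fun x _ => ZMod.natCast_zmod_val x)
    (fun _ _ => rfl)

section TemperleyLieb

variable {A : Type*} [NonUnitalRing A] {N : ℕ} {e : ZMod N → A}

def FarCommute (e : ZMod N → A) : Prop :=
  ∀ i j : ZMod N, j ≠ i - 1 → j ≠ i → j ≠ i + 1 → e i * e j = e j * e i

theorem FarCommute.cm_self_add (h : FarCommute e) {a : ℕ} (ha : 2 ≤ a) (haN : a ≤ N - 2)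
    (i : ZMod N) : cm (e i) (e (i + a)) = 0 := by
  refine sub_eq_zero.2 (h _ _ ?_ ?_ ?_)
  · have := natCast_ne_zero_of_lt (N := N) (a := a + 1) (by omega) (by omega)
    push_cast at this
    exact fun h' => this (by linear_combination h')
  · have := natCast_ne_zero_of_lt (N := N) (a := a) (by omega) (by omega)
    exact fun h' => this (by linear_combination h')
  · have := natCast_ne_zero_of_lt (N := N) (a := a - 1) (by omega) (by omega)
    push_cast [Nat.cast_sub (by omega : 1 ≤ a)] at this
    exact fun h' => this (by linear_combination h')

theorem FarCommute.cm_sub_self (h : FarCommute e) {a : ℕ} (ha : 2 ≤ a) (haN : a ≤ N - 2)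
    (j : ZMod N) : cm (e (j - a)) (e j) = 0 := by
  simpa using h.cm_self_add ha haN (j - a)

theorem FarCommute.cm_self_sub (h : FarCommute e) {a : ℕ} (ha : 2 ≤ a) (haN : a ≤ N - 2)
    (j : ZMod N) : cm (e j) (e (j - a)) = 0 := by
  rw [cm_swap, h.cm_sub_self ha haN, neg_zero]

theorem qq_succ {m : ℕ} (hm : m ≠ 0) (i : ZMod N) :
    qq e (m + 1) i = cm (e i) (qq e m (i + 1)) := by
  obtain ⟨k, rfl⟩ := Nat.exists_eq_succ_of_ne_zero hm
  rfl

theorem cm_qq_eq_zero {j : ZMod N} :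
    ∀ (m : ℕ) (i : ZMod N), (∀ s < m, cm (e j) (e (i + s)) = 0) → cm (e j) (qq e m i) = 0
  | 0, _, _ => cm_zero_right _
  | 1, i, h => by simpa [qq] using h 0 one_pos
  | m + 2, i, h => by
    have hi : cm (e j) (e i) = 0 := by simpa using h 0 (by omega)
    have hrest : cm (e j) (qq e (m + 1) (i + 1)) = 0 :=
      cm_qq_eq_zero (m + 1) (i + 1) fun s hs => by
        simpa [add_assoc, add_comm (1 : ZMod N)] using h (s + 1) (by omega)
    rw [qq_succ (by omega), cm_leibniz, hi, hrest, cm_zero_left, cm_zero_right, add_zero]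

theorem qq_succ_eq_cm_right (h : FarCommute e) {m : ℕ} (hm : 1 ≤ m) (hmN : m ≤ N - 2)
    (i : ZMod N) : qq e (m + 1) i = cm (qq e m i) (e (i + m)) := by
  induction m, hm using Nat.le_induction generalizing i with
  | base => simp [qq]
  | succ m hm ih =>
    rw [qq_succ (by omega), ih (by omega), cm_leibniz, ← qq_succ (by omega),
      show i + 1 + m = i + (m + 1 : ℕ) by push_cast; ring,
      h.cm_self_add (by omega) hmN, cm_zero_right, add_zero]

theorem cm_qq_succ_of_cm_left {m : ℕ} (hm : m ≠ 0) {i j : ZMod N} (hji : cm (e j) (e i) = 0) :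
    cm (e j) (qq e (m + 1) i) = cm (e i) (cm (e j) (qq e m (i + 1))) := by
  rw [qq_succ hm, cm_leibniz, hji, cm_zero_left, zero_add]

theorem cm_qq_succ_of_cm_right (h : FarCommute e) {m : ℕ} (hm : 1 ≤ m) (hmN : m ≤ N - 2)
    {i j : ZMod N} (hji : cm (e j) (e (i + m)) = 0) :
    cm (e j) (qq e (m + 1) i) = cm (cm (e j) (qq e m i)) (e (i + m)) := by
  rw [qq_succ_eq_cm_right h hm hmN, cm_leibniz, hji, cm_zero_right, add_zero]

theorem cm_e_qq_two_self (h1 : ∀ i : ZMod N, e i * e i = 0)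
    (h2 : ∀ i : ZMod N, e i * e (i + 1) * e i = e i) (j : ZMod N) :
    cm (e j) (qq e 2 j) = (-2 : ℤ) • e j :=
  cm_cm_of_mul_mul_self (h1 j) (h2 j)

theorem cm_e_qq_two_pred (h1 : ∀ i : ZMod N, e i * e i = 0)
    (h3 : ∀ i : ZMod N, e (i + 1) * e i * e (i + 1) = e (i + 1)) (j : ZMod N) :
    cm (e j) (qq e 2 (j - 1)) = (2 : ℤ) • e j := by
  have hbab := h3 (j - 1)
  rw [sub_add_cancel] at hbab
  change cm (e j) (cm (e (j - 1)) (e (j - 1 + 1))) = _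
  rw [sub_add_cancel, cm_swap (e (j - 1)), cm_neg_right, cm_cm_of_mul_mul_self (h1 j) hbab,
    ← neg_smul, neg_neg]

theorem cm_e_qq_three_pred (hN : 4 ≤ N) (h1 : ∀ i : ZMod N, e i * e i = 0)
    (h2 : ∀ i : ZMod N, e i * e (i + 1) * e i = e i)
    (h3 : ∀ i : ZMod N, e (i + 1) * e i * e (i + 1) = e (i + 1)) (h4 : FarCommute e)
    (j : ZMod N) : cm (e j) (qq e 3 (j - 1)) = qq e 2 j - qq e 2 (j - 1) := by
  have hbab := h3 (j - 1)
  rw [sub_add_cancel] at hbab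
  have hac : e (j - 1) * e (j + 1) = e (j + 1) * e (j - 1) := by
    have := h4.cm_self_add (a := 2) le_rfl (by omega) (j - 1)
    rwa [show j - 1 + (2 : ℕ) = j + 1 by push_cast; ring, cm, sub_eq_zero] at this
  change cm (e j) (cm (e (j - 1)) (cm (e (j - 1 + 1)) (e (j - 1 + 1 + 1)))) =
    cm (e j) (e (j + 1)) - cm (e (j - 1)) (e (j - 1 + 1))
  rw [sub_add_cancel]
  exact cm_cm_cm_of_mul_mul_self (h1 j) hbab (h2 j) hac

theorem cm_e_qq_self (h1 : ∀ i : ZMod N, e i * e i = 0)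
    (h2 : ∀ i : ZMod N, e i * e (i + 1) * e i = e i) (h4 : FarCommute e)
    {m : ℕ} (hm : 3 ≤ m) (hmN : m ≤ N - 1) (j : ZMod N) : cm (e j) (qq e m j) = 0 := by
  induction m, hm using Nat.le_induction with
  | base =>
    rw [cm_qq_succ_of_cm_right h4 (m := 2) (by omega) (by omega)
        (h4.cm_self_add le_rfl (by omega) j), cm_e_qq_two_self h1 h2, cm_zsmul_left,
      h4.cm_self_add le_rfl (by omega), smul_zero]
  | succ m hm ih =>
    rw [cm_qq_succ_of_cm_right h4 (by omega) (by omega) (h4.cm_self_add (by omega) (by omega) j),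
      ih (by omega), cm_zero_left]

theorem cm_e_qq_pred (h1 : ∀ i : ZMod N, e i * e i = 0)
    (h2 : ∀ i : ZMod N, e i * e (i + 1) * e i = e i)
    (h3 : ∀ i : ZMod N, e (i + 1) * e i * e (i + 1) = e (i + 1)) (h4 : FarCommute e)
    {m : ℕ} (hm : 3 ≤ m) (hmN : m ≤ N - 2) (j : ZMod N) :
    cm (e j) (qq e (m + 1) (j - 1)) = qq e m j := by
  induction m, hm using Nat.le_induction with
  | base =>
    have hfar : cm (e j) (e (j - 1 + (3 : ℕ))) = 0 := by
      rw [show j - 1 + (3 : ℕ) = j + (2 : ℕ) by push_cast; ring]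
      exact h4.cm_self_add le_rfl (by omega) j
    have hloc : cm (qq e 2 (j - 1)) (e (j + (2 : ℕ))) = 0 := by
      rw [cm_swap, cm_qq_eq_zero 2 (j - 1), neg_zero]
      intro s hs
      interval_cases s
      · simpa [show j + 2 - 3 = j - 1 by ring] using
          h4.cm_self_sub (a := 3) (by norm_num) (by omega) (j + 2)
      · simpa using h4.cm_self_sub (a := 2) le_rfl (by omega) (j + 2)
    rw [cm_qq_succ_of_cm_right h4 (by omega) (by omega) hfar,
      cm_e_qq_three_pred (by omega) h1 h2 h3 h4,
      show j - 1 + (3 : ℕ) = j + (2 : ℕ) by push_cast; ring, cm_sub_left, hloc, sub_zero,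
      ← qq_succ_eq_cm_right h4 (by omega) (by omega)]
  | succ m hm ih =>
    have hfar : cm (e j) (e (j - 1 + (m + 1 : ℕ))) = 0 := by
      rw [show j - 1 + (m + 1 : ℕ) = j + m by push_cast; ring]
      exact h4.cm_self_add (by omega) (by omega) j
    rw [cm_qq_succ_of_cm_right h4 (by omega) (by omega) hfar, ih (by omega),
      show j - 1 + (m + 1 : ℕ) = j + m by push_cast; ring,
      ← qq_succ_eq_cm_right h4 (by omega) (by omega)]

theorem cm_e_qq_sub_self (h4 : FarCommute e) {m : ℕ} (hm : 1 ≤ m) (hmN : m ≤ N - 2)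
    (j : ZMod N) : cm (e j) (qq e m (j - m)) = -qq e (m + 1) (j - m) := by
  rw [qq_succ_eq_cm_right h4 hm hmN, sub_add_cancel, cm_swap]

theorem cm_e_qq_succ_sub (h1 : ∀ i : ZMod N, e i * e i = 0)
    (h3 : ∀ i : ZMod N, e (i + 1) * e i * e (i + 1) = e (i + 1)) (h4 : FarCommute e)
    {m : ℕ} (hm : 2 ≤ m) (hmN : m ≤ N - 2) (j : ZMod N) :
    cm (e j) (qq e (m + 1) (j - m)) = 0 := by
  induction m, hm using Nat.le_induction with
  | base =>
    rw [cm_qq_succ_of_cm_left (by omega) (h4.cm_self_sub le_rfl hmN j),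
      show j - (2 : ℕ) + 1 = j - 1 by push_cast; ring, cm_e_qq_two_pred h1 h3, cm_zsmul_right,
      h4.cm_sub_self le_rfl hmN, smul_zero]
  | succ m hm ih =>
    rw [cm_qq_succ_of_cm_left (by omega) (h4.cm_self_sub (by omega) hmN j),
      show j - (m + 1 : ℕ) + 1 = j - m by push_cast; ring, ih (by omega), cm_zero_right]

theorem cm_e_qq_add_two_sub (h1 : ∀ i : ZMod N, e i * e i = 0)
    (h2 : ∀ i : ZMod N, e i * e (i + 1) * e i = e i)
    (h3 : ∀ i : ZMod N, e (i + 1) * e i * e (i + 1) = e (i + 1)) (h4 : FarCommute e)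
    {m : ℕ} (hm : 2 ≤ m) (hmN : m ≤ N - 3) (j : ZMod N) :
    cm (e j) (qq e (m + 2) (j - m)) = -qq e (m + 1) (j - m) := by
  induction m, hm using Nat.le_induction with
  | base =>
    have hloc : cm (e (j - (2 : ℕ))) (qq e 2 j) = 0 := by
      refine cm_qq_eq_zero 2 j fun s hs => ?_
      simpa using h4.cm_self_add (a := s + 2) (by omega) (by omega) (j - (2 : ℕ))
    rw [cm_qq_succ_of_cm_left (by omega) (h4.cm_self_sub le_rfl (by omega) j),
      show j - (2 : ℕ) + 1 = j - 1 by push_cast; ring, cm_e_qq_three_pred (by omega) h1 h2 h3 h4,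
      cm_sub_right, hloc, zero_sub, qq_succ (m := 2) (by omega),
      show j - (2 : ℕ) + 1 = j - 1 by push_cast; ring]
  | succ m hm ih =>
    rw [cm_qq_succ_of_cm_left (by omega) (h4.cm_self_sub (by omega) (by omega) j),
      show j - (m + 1 : ℕ) + 1 = j - m by push_cast; ring, ih (by omega), cm_neg_right,
      qq_succ (m := m + 1) (by omega), show j - (m + 1 : ℕ) + 1 = j - m by push_cast; ring]

theorem cm_e_qq_sub_of_lt (h1 : ∀ i : ZMod N, e i * e i = 0)
    (h2 : ∀ i : ZMod N, e i * e (i + 1) * e i = e i)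
    (h3 : ∀ i : ZMod N, e (i + 1) * e i * e (i + 1) = e (i + 1)) (h4 : FarCommute e)
    {k : ℕ} (hk : 2 ≤ k) {m : ℕ} (hkm : k + 3 ≤ m) (hmN : m ≤ N - 1) (j : ZMod N) :
    cm (e j) (qq e m (j - k)) = 0 := by
  induction k, hk using Nat.le_induction generalizing m with
  | base =>
    obtain ⟨n, rfl⟩ : ∃ n, m = n + 2 := ⟨m - 2, by omega⟩
    rw [cm_qq_succ_of_cm_left (by omega) (h4.cm_self_sub le_rfl (by omega) j),
      show j - (2 : ℕ) + 1 = j - 1 by push_cast; ring,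
      cm_e_qq_pred h1 h2 h3 h4 (by omega) (by omega)]
    refine cm_qq_eq_zero n j fun s hs => ?_
    simpa using h4.cm_self_add (a := s + 2) (by omega) (by omega) (j - (2 : ℕ))
  | succ k hk ih =>
    obtain ⟨n, rfl⟩ : ∃ n, m = n + 1 := ⟨m - 1, by omega⟩
    rw [cm_qq_succ_of_cm_left (by omega) (h4.cm_self_sub (by omega) (by omega) j),
      show j - (k + 1 : ℕ) + 1 = j - k by push_cast; ring, ih (by omega) (by omega),
      cm_zero_right]

/-- The string `q_{j+1-t}^m` contains `e_j` at position `t - 1`. For `m = 3` the two middle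
indicators (`t = 2 = m - 1`) fire together. -/
theorem cm_e_qq_window (h1 : ∀ i : ZMod N, e i * e i = 0)
    (h2 : ∀ i : ZMod N, e i * e (i + 1) * e i = e i)
    (h3 : ∀ i : ZMod N, e (i + 1) * e i * e (i + 1) = e (i + 1)) (h4 : FarCommute e)
    {m : ℕ} (hm : 3 ≤ m) (hmN : m ≤ N - 2) {t : ℕ} (ht : t ≤ m + 1) (j : ZMod N) :
    cm (e j) (qq e m (j + 1 - t)) =
      (if t = 0 then qq e (m + 1) j else 0) - (if t = m + 1 then qq e (m + 1) (j - m) else 0) +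
        (if t = 2 then qq e (m - 1) j else 0) -
        (if t = m - 1 then qq e (m - 1) (j - m + 2) else 0) := by
  obtain _ | k := t
  · simp (disch := omega) only [if_neg, ↓reduceIte, sub_zero, add_zero, Nat.cast_zero]
    rw [← qq_succ (by omega)]
  rw [show j + 1 - ((k + 1 : ℕ) : ZMod N) = j - k by push_cast; ring]
  obtain rfl | ⟨rfl, rfl⟩ | ⟨rfl, hm4⟩ | ⟨hk, rfl⟩ | rfl | rfl | ⟨hk, hkm⟩ :
      k = 0 ∨ (k = 1 ∧ m = 3) ∨ (k = 1 ∧ 4 ≤ m) ∨ (2 ≤ k ∧ m = k + 2) ∨ m = k + 1 ∨ k = m ∨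
        (2 ≤ k ∧ k + 3 ≤ m) := by omega
  all_goals simp (disch := omega) only [if_pos, if_neg, ↓reduceIte, sub_zero, zero_sub, add_zero,
    zero_add]
  · rw [Nat.cast_zero, sub_zero, cm_e_qq_self h1 h2 h4 hm (by omega)]
  · rw [show j - ((3 : ℕ) : ZMod N) + 2 = j - 1 by push_cast; ring, Nat.cast_one,
      cm_e_qq_three_pred (by omega) h1 h2 h3 h4]
  · obtain ⟨n, rfl⟩ : ∃ n, m = n + 1 := ⟨m - 1, by omega⟩
    rw [Nat.cast_one, cm_e_qq_pred h1 h2 h3 h4 (by omega) (by omega), Nat.add_sub_cancel]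
  · rw [cm_e_qq_add_two_sub h1 h2 h3 h4 hk (by omega), show k + 2 - 1 = k + 1 by omega,
      show j - ((k + 2 : ℕ) : ZMod N) + 2 = j - k by push_cast; ring]
  · exact cm_e_qq_succ_sub h1 h3 h4 (by omega) (by omega) j
  · exact cm_e_qq_sub_self h4 (by omega) hmN j
  · exact cm_e_qq_sub_of_lt h1 h2 h3 h4 hk hkm (by omega) j

theorem cm_e_qminus (hNe : Even N) (h4 : FarCommute e) {m : ℕ} (hmN : m + 2 ≤ N) (j : ZMod N) :
    cm (e j) (qminus e m) =
      (-1 : ℤ) ^ j.val •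
        ∑ t ∈ range (m + 2), (-1 : ℤ) ^ (t + 1) • cm (e j) (qq e m (j + 1 - t)) := by
  have : NeZero N := ⟨by omega⟩
  set g : ZMod N → A := fun x => (-1 : ℤ) ^ x.val • cm (e j) (qq e m x)
  have hsign (t : ℕ) : (-1 : ℤ) ^ (j + 1 - t).val = (-1) ^ j.val * (-1) ^ (t + 1) := by
    have hone : (-1 : ℤ) ^ (1 : ZMod N).val = -1 := by
      simpa using neg_one_pow_val_natCast (N := N) hNe 1
    rw [neg_one_pow_val_sub hNe, neg_one_pow_val_add hNe, hone, neg_one_pow_val_natCast hNe]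
    ring
  have hout (t : ℕ) (ht : m + 2 ≤ t) (htN : t < N) : g (j + 1 - t) = 0 := by
    refine smul_eq_zero_of_right _ (cm_qq_eq_zero m _ fun s hs => ?_)
    have hts : s + 1 ≤ t := by omega
    rw [show j + 1 - t + s = j - (t - (s + 1) : ℕ) by push_cast [Nat.cast_sub hts]; ring]
    exact h4.cm_self_sub (by omega) (by omega) j
  calc cm (e j) (qminus e m) = ∑ i ∈ range N, g i := by
        rw [qminus, cm_sum_right]
        refine sum_congr rfl fun i _ => ?_
        rw [cm_zsmul_right]
        simp only [g, neg_one_pow_val_natCast hNe]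
    _ = ∑ x, g (j + 1 - x) := by
        rw [sum_range_natCast_eq_sum_univ]
        exact (Fintype.sum_equiv (Equiv.subLeft (j + 1)) _ _ fun _ => rfl).symm
    _ = ∑ t ∈ range (m + 2), g (j + 1 - t) := by
        rw [← sum_range_natCast_eq_sum_univ]
        exact (sum_subset (range_subset_range.2 hmN) fun t ht ht' =>
          hout t (by simpa using ht') (by simpa using ht)).symm
    _ = _ := by
        rw [smul_sum]
        refine sum_congr rfl fun t _ => ?_
        simp only [g, hsign, mul_smul]

theorem cm_e_qminus_one (hN : 3 ≤ N) (hNe : Even N) (h4 : FarCommute e) (j : ZMod N) :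
    cm (e j) (qminus e 1) = (-1 : ℤ) ^ j.val • (-qq e 2 j + qq e 2 (j - 1)) := by
  have hend := cm_e_qq_sub_self h4 (m := 1) le_rfl (by omega) j
  rw [Nat.cast_one] at hend
  rw [cm_e_qminus hNe h4 (by omega)]
  simp only [sum_range_succ, sum_range_zero, Nat.cast_zero, Nat.cast_one, sub_zero,
    add_sub_cancel_right, show j + 1 - ((2 : ℕ) : ZMod N) = j - 1 by push_cast; ring]
  rw [hend, ← qq_succ one_ne_zero, show qq e 1 j = e j from rfl, cm_self]
  module

theorem cm_e_qminus_two (hN : 4 ≤ N) (hNe : Even N) (h1 : ∀ i : ZMod N, e i * e i = 0)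
    (h2 : ∀ i : ZMod N, e i * e (i + 1) * e i = e i)
    (h3 : ∀ i : ZMod N, e (i + 1) * e i * e (i + 1) = e (i + 1)) (h4 : FarCommute e)
    (j : ZMod N) :
    cm (e j) (qminus e 2) =
      (-1 : ℤ) ^ j.val • (-qq e 3 j - qq e 3 (j - 2) - (4 : ℤ) • qq e 1 j) := by
  have hend := cm_e_qq_sub_self h4 (m := 2) one_le_two (by omega) j
  rw [Nat.cast_ofNat] at hend
  rw [cm_e_qminus hNe h4 (by omega)]
  simp only [sum_range_succ, sum_range_zero, Nat.reduceAdd, Nat.cast_zero, Nat.cast_one,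
    Nat.cast_ofNat, sub_zero, add_sub_cancel_right, show j + 1 - 2 = j - 1 by ring,
    show j + 1 - 3 = j - 2 by ring]
  rw [hend, ← qq_succ two_ne_zero, cm_e_qq_two_self h1 h2, cm_e_qq_two_pred h1 h3,
    show qq e 1 j = e j from rfl]
  module

theorem cm_e_qminus_of_three_le (hNe : Even N) (h1 : ∀ i : ZMod N, e i * e i = 0)
    (h2 : ∀ i : ZMod N, e i * e (i + 1) * e i = e i)
    (h3 : ∀ i : ZMod N, e (i + 1) * e i * e (i + 1) = e (i + 1)) (h4 : FarCommute e)
    {m : ℕ} (hm : 3 ≤ m) (hmN : m ≤ N - 2) (j : ZMod N) :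
    cm (e j) (qminus e m) =
      (-1 : ℤ) ^ j.val •
        (-qq e (m + 1) j - (-1 : ℤ) ^ m • qq e (m + 1) (j - m) - qq e (m - 1) j -
          (-1 : ℤ) ^ m • qq e (m - 1) (j - m + 2)) := by
  rw [cm_e_qminus hNe h4 (by omega)]
  congr 1
  rw [sum_congr rfl fun t ht => congrArg _
    (cm_e_qq_window h1 h2 h3 h4 hm hmN (Nat.lt_succ_iff.1 (mem_range.1 ht)) j)]
  simp only [smul_sub, smul_add, smul_ite, smul_zero, sum_sub_distrib, sum_add_distrib,
    sum_ite_eq', mem_range, if_pos (show 0 < m + 2 by omega),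
    if_pos (show m + 1 < m + 2 by omega), if_pos (show 2 < m + 2 by omega),
    if_pos (show m - 1 < m + 2 by omega),
    Nat.sub_add_cancel (show 1 ≤ m by omega)]
  module

end TemperleyLieb

theorem stmt_6 {A : Type*} [NonUnitalRing A] (N : ℕ) (hN : 4 ≤ N) (hNe : Even N)
    (e : ZMod N → A)
    (h1 : ∀ i : ZMod N, e i * e i = 0)
    (h2 : ∀ i : ZMod N, e i * e (i + 1) * e i = e i)
    (h3 : ∀ i : ZMod N, e (i + 1) * e i * e (i + 1) = e (i + 1))
    (h4 : ∀ i j : ZMod N, j ≠ i - 1 → j ≠ i → j ≠ i + 1 → e i * e j = e j * e i) :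
    ∀ j : ZMod N,
      cm (e j) (qminus e 1) = ((-1 : ℤ) ^ j.val) • (-(qq e 2 j) + qq e 2 (j - 1)) ∧
      cm (e j) (qminus e 2) =
        ((-1 : ℤ) ^ j.val) • (-(qq e 3 j) - qq e 3 (j - 2) - (4 : ℤ) • qq e 1 j) ∧
      ∀ m : ℕ, 3 ≤ m → m ≤ N - 2 →
        cm (e j) (qminus e m) =
          ((-1 : ℤ) ^ j.val) •
            (-(qq e (m + 1) j) - ((-1 : ℤ) ^ m) • qq e (m + 1) (j - (m : ZMod N))
              - qq e (m - 1) j - ((-1 : ℤ) ^ m) • qq e (m - 1) (j - (m : ZMod N) + 2)) :=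
  fun j => ⟨cm_e_qminus_one (by omega) hNe h4 j, cm_e_qminus_two hN hNe h1 h2 h3 h4 j,
    fun _ hm hmN => cm_e_qminus_of_three_le hNe h1 h2 h3 h4 hm hmN j⟩
end

section
/- The following commutation relations hold: [H_e, H_o] = q_-^2; for every s ≥ 1 with 2s + 1 ≤ N − 1, [H_e, q_+^{2s}] = 0 and [H_o, q_+^{2s}] = 0; and for every s ≥ 0 with 2s + 2 ≤ N − 1, [H_e, q_e^{2s+1}] = 0 and [H_o, q_o^{2s+1}] = 0. -/
open Finset

namespace PeriodicTL

section Commutator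

variable {A : Type*} [NonUnitalRing A]

theorem cm_eq_zero_of_commute {x y : A} (h : Commute x y) : cm x y = 0 := sub_eq_zero_of_eq h

@[simp] theorem cm_zero_left (y : A) : cm 0 y = 0 := by simp [cm]

@[simp] theorem cm_zero_right (x : A) : cm x 0 = 0 := by simp [cm]

theorem cm_comm (x y : A) : cm y x = -cm x y := (neg_sub _ _).symm

theorem cm_cm (a b c : A) : cm a (cm b c) = cm (cm a b) c + cm b (cm a c) := by
  simp only [cm, mul_sub, sub_mul, mul_assoc]; abel

theorem cm_cm_of_commute {a b : A} (h : Commute a b) (c : A) : cm a (cm b c) = cm b (cm a c) := by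
  rw [cm_cm, cm_eq_zero_of_commute h, cm_zero_left, zero_add]

theorem _root_.Commute.cm_right {x a b : A} (ha : Commute x a) (hb : Commute x b) :
    Commute x (cm a b) :=
  (ha.mul_right hb).sub_right (hb.mul_right ha)

theorem cm_sum_sum {ι κ : Type*} (s : Finset ι) (t : Finset κ) (f : ι → A) (g : κ → A) :
    cm (∑ i ∈ s, f i) (∑ j ∈ t, g j) = ∑ i ∈ s, ∑ j ∈ t, cm (f i) (g j) := by
  simp only [cm, sum_mul_sum, sum_sub_distrib]
  rw [sum_comm (s := t)]

theorem mul_cm_mul_eq_zero {x y r : A} (hr : Commute x r) (hxyx : x * y * x = x) :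
    x * cm y r * x = 0 := by
  have hyr : x * (y * r) * x = x * r := by
    rw [← mul_assoc, (hr.symm).right_comm, hxyx]
  have hry : x * (r * y) * x = x * r := by
    rw [← mul_assoc, hr.eq, mul_assoc r, mul_assoc r, hxyx]
  rw [cm, mul_sub, sub_mul, hyr, hry, sub_self]

theorem mul_cm_self_eq_zero {x q : A} (hx : x * x = 0) (hq : x * q * x = 0) : x * cm x q = 0 := by
  rw [cm, mul_sub, ← mul_assoc, ← mul_assoc, hx, hq, zero_mul, sub_zero]

theorem cm_self_mul_eq_zero {x q : A} (hx : x * x = 0) (hq : x * q * x = 0) : cm x q * x = 0 := by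
  rw [cm, sub_mul, mul_assoc, mul_assoc, hx, ← mul_assoc, hq, mul_zero, sub_zero]

theorem cm_cm_self_eq_zero {x q : A} (hx : x * x = 0) (hq : x * q * x = 0) : cm x (cm x q) = 0 := by
  rw [cm, mul_cm_self_eq_zero hx hq, cm_self_mul_eq_zero hx hq, sub_self]

theorem cm_neg_right (x y : A) : cm x (-y) = -cm x y := by
  simp only [cm, mul_neg, neg_mul]; abel

theorem cm_cm_cm_of_commute_left {a b r : A} (har : Commute a r) (hbab : b * a * b = b)
    (hb : b * b = 0) (hbrb : b * r * b = 0) : cm b (cm a (cm b r)) = cm b r := by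
  have hbaq : b * a * cm b r = b * r - b * r * a * b := by
    rw [cm, mul_sub, ← mul_assoc, hbab, ← mul_assoc, mul_assoc b a r, har.eq, ← mul_assoc]
  have hqab : cm b r * a * b = b * r * a * b - r * b := by
    rw [cm, sub_mul, sub_mul, mul_assoc r b a, mul_assoc r (b * a) b, hbab]
  calc cm b (cm a (cm b r))
      = b * a * cm b r - b * cm b r * a - a * (cm b r * b) + cm b r * a * b := by
        simp only [cm, mul_sub, sub_mul, mul_assoc]; abel
    _ = cm b r := by
        rw [hbaq, hqab, mul_cm_self_eq_zero hb hbrb, cm_self_mul_eq_zero hb hbrb, cm]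
        simp only [zero_mul, mul_zero]; abel

theorem cm_cm_cm_of_commute_right {f g r : A} (hgr : Commute g r) (hfgf : f * g * f = f)
    (hf : f * f = 0) (hfrf : f * r * f = 0) : cm f (cm (cm r f) g) = -cm r f := by
  have hfq : f * cm r f = 0 := by
    rw [← neg_eq_zero, ← mul_neg, ← cm_comm, mul_cm_self_eq_zero hf hfrf]
  have hqf : cm r f * f = 0 := by
    rw [← neg_eq_zero, ← neg_mul, ← cm_comm, cm_self_mul_eq_zero hf hfrf]
  have hfgq : f * g * cm r f = f * r * g * f - f * r := by
    rw [cm, mul_sub, ← mul_assoc, mul_assoc f g r, hgr.eq, ← mul_assoc f r g,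
      ← mul_assoc (f * g), hfgf]
  have hqgf : cm r f * g * f = r * f - f * r * g * f := by
    rw [cm, sub_mul, sub_mul, mul_assoc r f g, mul_assoc r (f * g) f, hfgf]
  calc cm f (cm (cm r f) g)
      = f * cm r f * g - f * g * cm r f - cm r f * g * f + g * (cm r f * f) := by
        simp only [cm, mul_sub, sub_mul, mul_assoc]; abel
    _ = -cm r f := by
        rw [hfq, hqf, hfgq, hqgf, cm]
        simp only [zero_mul, mul_zero]; abel

end Commutator

section ZModSums

variable {M : Type*} [AddCommMonoid M] {N : ℕ}

theorem sum_range_natCast [NeZero N] (f : ZMod N → M) : ∑ i ∈ range N, f i = ∑ x, f x :=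
  sum_nbij' (↑) ZMod.val (fun _ _ => mem_univ _) (fun x _ => mem_range.2 x.val_lt)
    (fun _ ha => ZMod.val_cast_of_lt (mem_range.1 ha)) (fun x _ => ZMod.natCast_zmod_val x)
    (fun _ _ => rfl)

theorem sum_univ_eq_sum_range_sub [NeZero N] (x : ZMod N) (f : ZMod N → M) :
    ∑ y, f y = ∑ k ∈ range N, f (x - k) := by
  rw [sum_range_natCast (fun y => f (x - y))]
  exact (Fintype.sum_equiv (Equiv.subLeft x) _ _ fun y => by simp).symm

def parity (hN : Even N) : ZMod N →+* ZMod 2 := ZMod.castHom (even_iff_two_dvd.mp hN) _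

theorem parity_natCast_eq_zero_iff (hN : Even N) (k : ℕ) : parity hN k = 0 ↔ Even k := by
  rw [map_natCast, ZMod.natCast_eq_zero_iff_even]

theorem parity_natCast_eq_one_iff (hN : Even N) (k : ℕ) : parity hN k = 1 ↔ Odd k := by
  rw [map_natCast, ZMod.natCast_eq_one_iff_odd]

theorem sum_parity_sub [NeZero N] (hN : Even N) (f : ZMod N → M) (b : ZMod 2) (c : ZMod N) :
    ∑ x with parity hN x = b, f (x - c) = ∑ x with parity hN x = b - parity hN c, f x :=
  sum_equiv (Equiv.subRight c) (by simp [eq_sub_iff_add_eq]) (by simp)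

end ZModSums

section StringSums

variable {A : Type*} [NonUnitalRing A] {N : ℕ} (e : ZMod N → A)

theorem qplus_eq_sum [NeZero N] (m : ℕ) : qplus e m = ∑ x, qq e m x :=
  sum_range_natCast (qq e m)

theorem qev_eq_sum_parity [NeZero N] (hN : Even N) (m : ℕ) :
    qev e m = ∑ x with parity hN x = 0, qq e m x := by
  rw [qev, sum_filter, ← sum_range_natCast]
  simp only [parity_natCast_eq_zero_iff]

theorem qod_eq_sum_parity [NeZero N] (hN : Even N) (m : ℕ) :
    qod e m = ∑ x with parity hN x = 1, qq e m x := by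
  rw [qod, sum_filter, ← sum_range_natCast]
  simp only [parity_natCast_eq_one_iff]

theorem qminus_eq_qev_sub_qod (m : ℕ) : qminus e m = qev e m - qod e m := by
  rw [qminus, qev, qod, ← sum_sub_distrib]
  refine sum_congr rfl fun i _ => ?_
  rcases Nat.even_or_odd i with hi | hi
  · simp [hi.neg_one_pow, hi, Nat.not_odd_iff_even.2 hi]
  · simp [hi.neg_one_pow, hi, Nat.not_even_iff_odd.2 hi]

end StringSums

section Strings

variable {A : Type*} [NonUnitalRing A] {N : ℕ} (e : ZMod N → A)

@[simp] theorem qq_one (i : ZMod N) : qq e 1 i = e i := rfl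

theorem qq_succ {m : ℕ} (hm : m ≠ 0) (i : ZMod N) :
    qq e (m + 1) i = cm (e i) (qq e m (i + 1)) := by
  obtain ⟨m, rfl⟩ := Nat.exists_eq_succ_of_ne_zero hm
  rfl

theorem commute_qq {x : A} {m : ℕ} {i : ZMod N} (h : ∀ t < m, Commute x (e (i + t))) :
    Commute x (qq e m i) := by
  induction m generalizing i with
  | zero => exact Commute.zero_right x
  | succ m ih =>
    rcases Nat.eq_zero_or_pos m with rfl | hm
    · simpa using h 0 one_pos
    rw [qq_succ e hm.ne']
    have hi : Commute x (e i) := by simpa using h 0 (by omega)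
    refine hi.cm_right (ih fun t ht => ?_)
    simpa [add_assoc, add_comm (1 : ZMod N)] using h (t + 1) (by omega)

variable (h1 : ∀ i : ZMod N, e i * e i = 0)
    (h2 : ∀ i : ZMod N, e i * e (i + 1) * e i = e i)
    (h3 : ∀ i : ZMod N, e (i + 1) * e i * e (i + 1) = e (i + 1))
    (h4 : ∀ i j : ZMod N, j ≠ i - 1 → j ≠ i → j ≠ i + 1 → e i * e j = e j * e i)

include h4 in
theorem commute_apply_add {d : ℕ} (hd : 2 ≤ d) (hdN : d ≤ N - 2) (i : ZMod N) :
    Commute (e i) (e (i + d)) := by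
  have hne : ∀ c : ℕ, 0 < c → c < N → (c : ZMod N) ≠ 0 := fun c hc hcN h =>
    absurd (Nat.le_of_dvd hc ((ZMod.natCast_eq_zero_iff c N).1 h)) (by omega)
  refine h4 i _ (fun h => hne (d + 1) (by omega) (by omega) ?_)
    (fun h => hne d (by omega) (by omega) ?_) (fun h => hne (d - 1) (by omega) (by omega) ?_)
  · push_cast; linear_combination h
  · linear_combination h
  · rw [Nat.cast_sub (by omega)]; push_cast; linear_combination h

include h4 in
theorem commute_apply_add_qq {m d : ℕ} (hmd : m + 1 ≤ d) (hdN : d ≤ N - 2) (i : ZMod N) :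
    Commute (e (i + d)) (qq e m i) :=
  commute_qq e fun t ht => by
    simpa [add_assoc, ← Nat.cast_add, Nat.add_sub_cancel' (by omega : t ≤ d)] using
      (commute_apply_add e h4 (d := d - t) (by omega) (by omega) (i + t)).symm

include h4 in
theorem commute_apply_qq_add {m d : ℕ} (hd : 2 ≤ d) (hmd : m + d ≤ N - 1) (i : ZMod N) :
    Commute (e i) (qq e m (i + d)) :=
  commute_qq e fun t ht => by
    simpa [add_assoc] using commute_apply_add e h4 (d := d + t) (by omega) (by omega) i

-- Nesting from the right gives the same string: in the inductive step `e i` commutes with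
-- `e (i + m + 1)`.
include h4 in
theorem qq_succ_eq_cm_right {m : ℕ} (hm : 1 ≤ m) (hmN : m + 1 ≤ N - 1) (i : ZMod N) :
    qq e (m + 1) i = cm (qq e m i) (e (i + m)) := by
  induction m, hm using Nat.le_induction generalizing i with
  | base => simp [qq_succ e one_ne_zero]
  | succ m hm ih =>
    have hfar : cm (e i) (e (i + 1 + m)) = 0 := cm_eq_zero_of_commute <| by
      simpa [add_assoc, add_comm (1 : ZMod N)] using
        commute_apply_add e h4 (d := m + 1) (by omega) (by omega) i
    rw [qq_succ e (by omega), ih (by omega), cm_cm, hfar, cm_zero_right, add_zero,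
      ← qq_succ e (by omega)]
    push_cast; ring_nf

include h2 h4 in
theorem left_sandwich_qq_eq_zero {m : ℕ} (hm : 2 ≤ m) (hmN : m ≤ N - 2) (i : ZMod N) :
    e i * qq e m (i + 1) * e i = 0 := by
  obtain ⟨m, rfl⟩ : ∃ n, m = n + 1 := ⟨m - 1, by omega⟩
  rw [qq_succ e (by omega), add_assoc, one_add_one_eq_two]
  have hfar : Commute (e i) (qq e m (i + 2)) := by
    exact_mod_cast commute_apply_qq_add e h4 (d := 2) le_rfl (by omega) i
  exact mul_cm_mul_eq_zero hfar (h2 i)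

include h3 h4 in
theorem right_sandwich_qq_eq_zero {m : ℕ} (hm : 2 ≤ m) (hmN : m ≤ N - 2)
    (i : ZMod N) : e (i + m) * qq e m i * e (i + m) = 0 := by
  obtain ⟨m, rfl⟩ : ∃ n, m = n + 1 := ⟨m - 1, by omega⟩
  have hcast : i + ↑(m + 1) = i + m + 1 := by push_cast; ring
  rw [qq_succ_eq_cm_right e h4 (by omega) (by omega), cm_comm, mul_neg, neg_mul, neg_eq_zero,
    hcast]
  have hfar : Commute (e (i + m + 1)) (qq e m i) := by
    simpa [add_assoc] using commute_apply_add_qq e h4 (d := m + 1) le_rfl (by omega) i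
  exact mul_cm_mul_eq_zero hfar (h3 (i + m))

include h1 h2 h4 in
theorem cm_qq_first {m : ℕ} (hm : m ≠ 2) (hmN : m ≤ N - 1) (i : ZMod N) :
    cm (e i) (qq e m i) = 0 := by
  rcases Nat.lt_or_ge m 2 with hlt | hge
  · interval_cases m <;> simp [cm, qq]
  obtain ⟨m, rfl⟩ : ∃ n, m = n + 1 := ⟨m - 1, by omega⟩
  rw [qq_succ e (by omega)]
  exact cm_cm_self_eq_zero (h1 i) (left_sandwich_qq_eq_zero e h2 h4 (by omega) (by omega) i)

include h1 h2 h3 h4 in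
theorem cm_qq_second {m : ℕ} (hm : 4 ≤ m) (hmN : m ≤ N - 1) (i : ZMod N) :
    cm (e (i + 1)) (qq e m i) = qq e (m - 1) (i + 1) := by
  obtain ⟨m, rfl⟩ : ∃ n, m = n + 2 := ⟨m - 2, by omega⟩
  have hfar : Commute (e i) (qq e m (i + 1 + 1)) := by
    simpa [add_assoc, one_add_one_eq_two] using
      commute_apply_qq_add e h4 (d := 2) le_rfl (by omega) i
  rw [qq_succ e (by omega), qq_succ e (by omega), (by omega : m + 2 - 1 = m + 1),
    cm_cm_cm_of_commute_left hfar (h3 i) (h1 _)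
      (left_sandwich_qq_eq_zero e h2 h4 (by omega) (by omega) _), qq_succ e (by omega)]

include h1 h2 h3 h4 in
theorem cm_qq_inner {k m : ℕ} (hk : 2 ≤ k) (hkm : k + 3 ≤ m) (hmN : m ≤ N - 1)
    (i : ZMod N) : cm (e (i + k)) (qq e m i) = 0 := by
  induction k, hk using Nat.le_induction generalizing m i with
  | base =>
    obtain ⟨m, rfl⟩ : ∃ n, m = n + 1 := ⟨m - 1, by omega⟩
    have hfar : Commute (e (i + 1 + 1)) (e i) := by
      simpa [add_assoc, one_add_one_eq_two] using
        (commute_apply_add e h4 (d := 2) le_rfl (by omega) i).symm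
    have hfar' : Commute (e i) (qq e (m - 1) (i + 1 + 1)) := by
      simpa [add_assoc, one_add_one_eq_two] using
        commute_apply_qq_add e h4 (d := 2) le_rfl (by omega) i
    rw [Nat.cast_two, ← one_add_one_eq_two, ← add_assoc, qq_succ e (by omega),
      cm_cm_of_commute hfar, cm_qq_second e h1 h2 h3 h4 (by omega) (by omega),
      cm_eq_zero_of_commute hfar']
  | succ k hk ih =>
    obtain ⟨m, rfl⟩ : ∃ n, m = n + 1 := ⟨m - 1, by omega⟩
    have hfar : Commute (e (i + ↑(k + 1))) (e i) :=
      (commute_apply_add e h4 (by omega) (by omega) i).symm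
    have hcast : i + ↑(k + 1) = i + 1 + k := by push_cast; ring
    rw [qq_succ e (by omega), cm_cm_of_commute hfar, hcast, ih (by omega) (by omega),
      cm_zero_right]

include h1 h2 h3 h4 in
theorem cm_qq_penultimate {k m : ℕ} (hk : 2 ≤ k) (hkm : k + 2 = m) (hmN : m ≤ N - 1)
    (i : ZMod N) : cm (e (i + k)) (qq e m i) = -qq e (m - 1) i := by
  subst hkm
  have hfar : Commute (e (i + k + 1)) (qq e k i) := by
    simpa [add_assoc] using commute_apply_add_qq e h4 (d := k + 1) le_rfl (by omega) i
  have hcast : i + ↑(k + 1) = i + k + 1 := by push_cast; ring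
  rw [qq_succ_eq_cm_right e h4 (by omega) hmN, qq_succ_eq_cm_right e h4 (by omega) (by omega),
    hcast, cm_cm_cm_of_commute_right hfar (h2 _) (h1 _)
      (right_sandwich_qq_eq_zero e h3 h4 hk (by omega) i),
    (by omega : k + 2 - 1 = k + 1), qq_succ_eq_cm_right e h4 (by omega) (by omega)]

include h1 h3 h4 in
theorem cm_qq_last {k m : ℕ} (hk : k ≠ 1) (hkm : k + 1 = m) (hmN : m ≤ N - 1) (i : ZMod N) :
    cm (e (i + k)) (qq e m i) = 0 := by
  subst hkm
  rcases Nat.eq_zero_or_pos k with rfl | hk0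
  · simp [cm]
  rw [qq_succ_eq_cm_right e h4 hk0 hmN, cm_comm _ (qq e k i), cm_neg_right, neg_eq_zero]
  exact cm_cm_self_eq_zero (h1 _)
    (right_sandwich_qq_eq_zero e h3 h4 (by omega) (by omega) i)

include h4 in
theorem cm_qq_after {m : ℕ} (hm : 1 ≤ m) (hmN : m + 1 ≤ N - 1) (i : ZMod N) :
    cm (e (i + m)) (qq e m i) = -qq e (m + 1) i := by
  rw [qq_succ_eq_cm_right e h4 hm hmN, cm_comm]

theorem cm_qq_before {m : ℕ} (hm : m ≠ 0) (i : ZMod N) :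
    cm (e (i - 1)) (qq e m i) = qq e (m + 1) (i - 1) := by
  rw [qq_succ e hm, sub_add_cancel]

include h1 h2 in
theorem cm_qq_two_first (i : ZMod N) : cm (e i) (qq e 2 i) = -(2 • e i) := by
  simp only [qq_succ e one_ne_zero, qq_one, cm, mul_sub, sub_mul, ← mul_assoc, h1, zero_mul, h2]
  rw [mul_assoc, h1, mul_zero]
  abel

include h1 h3 in
theorem cm_qq_two_second (i : ZMod N) : cm (e (i + 1)) (qq e 2 i) = 2 • e (i + 1) := by
  simp only [qq_succ e one_ne_zero, qq_one, cm, mul_sub, sub_mul, ← mul_assoc, h1, zero_mul, h3]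
  rw [mul_assoc, h1, mul_zero]
  abel

-- The string starts at `x - k`, so `k = N - 1` is the site just before it.
include h1 h2 h3 h4 in
theorem cm_qq_sub [NeZero N] {m k : ℕ} (hm : 4 ≤ m) (hmN : m ≤ N - 2) (hk : k < N)
    (x : ZMod N) :
    cm (e x) (qq e m (x - k)) =
      (if k = N - 1 then qq e (m + 1) x else 0) + (if k = 1 then qq e (m - 1) x else 0)
        - (if k = m then qq e (m + 1) (x - k) else 0)
        - (if k = m - 2 then qq e (m - 1) (x - k) else 0) := by
  obtain ⟨i, rfl⟩ : ∃ i, x = i + k := ⟨x - k, by ring⟩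
  rw [add_sub_cancel_right]
  obtain rfl | rfl | hk' | hk' | hk' | rfl | hk' | rfl :
      k = 0 ∨ k = 1 ∨ (2 ≤ k ∧ k + 3 ≤ m) ∨ k + 2 = m ∨ k + 1 = m ∨ k = m ∨
        (m + 1 ≤ k ∧ k ≤ N - 2) ∨ k = N - 1 := by omega
  · rw [Nat.cast_zero, add_zero, cm_qq_first e h1 h2 h4 (by omega) (by omega)]
    split_ifs <;> first | contradiction | omega | abel
  · rw [Nat.cast_one, cm_qq_second e h1 h2 h3 h4 hm (by omega)]
    split_ifs <;> first | contradiction | omega | abel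
  · rw [cm_qq_inner e h1 h2 h3 h4 hk'.1 hk'.2 (by omega)]
    split_ifs <;> first | contradiction | omega | abel
  · rw [cm_qq_penultimate e h1 h2 h3 h4 (by omega) hk' (by omega)]
    split_ifs <;> first | contradiction | omega | abel
  · rw [cm_qq_last e h1 h3 h4 (by omega) hk' (by omega)]
    split_ifs <;> first | contradiction | omega | abel
  · rw [cm_qq_after e h4 (by omega) (by omega)]
    split_ifs <;> first | contradiction | omega | abel
  · rw [cm_eq_zero_of_commute (commute_apply_add_qq e h4 hk'.1 hk'.2 i)]
    split_ifs <;> first | contradiction | omega | abel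
  · rw [Nat.cast_sub (by omega), ZMod.natCast_self, Nat.cast_one, zero_sub, ← sub_eq_add_neg,
      cm_qq_before e (by omega)]
    split_ifs <;> first | contradiction | omega | abel

include h1 h2 h3 h4 in
theorem cm_qq_two_sub [NeZero N] {k : ℕ} (hN4 : 4 ≤ N) (hk : k < N) (x : ZMod N) :
    cm (e x) (qq e 2 (x - k)) =
      (if k = N - 1 then qq e 3 x else 0) + (if k = 1 then 2 • e x else 0)
        - (if k = 2 then qq e 3 (x - k) else 0) - (if k = 0 then 2 • e x else 0) := by
  obtain ⟨i, rfl⟩ : ∃ i, x = i + k := ⟨x - k, by ring⟩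
  rw [add_sub_cancel_right]
  obtain rfl | rfl | rfl | hk' | rfl :
      k = 0 ∨ k = 1 ∨ k = 2 ∨ (3 ≤ k ∧ k ≤ N - 2) ∨ k = N - 1 := by omega
  · rw [Nat.cast_zero, add_zero, cm_qq_two_first e h1 h2]
    split_ifs <;> first | contradiction | omega | abel
  · rw [Nat.cast_one, cm_qq_two_second e h1 h3]
    split_ifs <;> first | contradiction | omega | abel
  · rw [cm_qq_after e h4 (by omega) (by omega)]
    split_ifs <;> first | contradiction | omega | abel
  · rw [cm_eq_zero_of_commute (commute_apply_add_qq e h4 hk'.1 hk'.2 i)]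
    split_ifs <;> first | contradiction | omega | abel
  · rw [Nat.cast_sub (by omega), ZMod.natCast_self, Nat.cast_one, zero_sub, ← sub_eq_add_neg,
      cm_qq_before e (by omega)]
    split_ifs <;> first | contradiction | omega | abel

include h1 h2 h3 h4 in
theorem sum_cm_qq [NeZero N] {m : ℕ} (hm : 2 ≤ m) (hm3 : m ≠ 3) (hmN : m ≤ N - 2)
    (x : ZMod N) :
    ∑ y, cm (e x) (qq e m y) =
      qq e (m + 1) x - qq e (m + 1) (x - m) + (qq e (m - 1) x - qq e (m - 1) (x - ↑(m - 2))) := by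
  rw [sum_univ_eq_sum_range_sub x]
  rcases (by omega : m = 2 ∨ 4 ≤ m) with rfl | hm4
  · rw [sum_congr rfl fun k hk => cm_qq_two_sub e h1 h2 h3 h4 (by omega) (mem_range.1 hk) x]
    simp only [sum_add_distrib, sum_sub_distrib, sum_ite_eq', mem_range,
      if_pos (show N - 1 < N by omega), if_pos (show 2 < N by omega), if_pos (show 1 < N by omega),
      if_pos (show 0 < N by omega), Nat.reduceAdd, Nat.reduceSub, Nat.cast_zero, sub_zero, qq_one]
    abel
  · rw [sum_congr rfl fun k hk => cm_qq_sub e h1 h2 h3 h4 hm4 hmN (mem_range.1 hk) x]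
    simp only [sum_add_distrib, sum_sub_distrib, sum_ite_eq', mem_range,
      if_pos (show N - 1 < N by omega), if_pos (show m < N by omega), if_pos (show 1 < N by omega),
      if_pos (show m - 2 < N by omega)]
    abel

include h1 h2 h3 h4 in
theorem cm_sum_parity_qplus [NeZero N] (hN : Even N) (b : ZMod 2) {m : ℕ} (hm : Even m)
    (hm2 : 2 ≤ m) (hmN : m ≤ N - 2) : cm (∑ x with parity hN x = b, e x) (qplus e m) = 0 := by
  have hpar : ∀ c : ℕ, Even c → parity hN c = 0 := fun c hc =>
    (parity_natCast_eq_zero_iff hN c).2 hc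
  have hm3 : m ≠ 3 := by rintro rfl; exact Nat.not_even_iff_odd.2 (by decide) hm
  rw [qplus_eq_sum, cm_sum_sum, sum_congr rfl fun x _ => sum_cm_qq e h1 h2 h3 h4 hm2 hm3 hmN x,
    sum_add_distrib, sum_sub_distrib, sum_sub_distrib, sum_parity_sub, sum_parity_sub,
    hpar m hm, hpar (m - 2) ((Nat.even_sub (by omega)).2 (by simp [hm])), sub_zero]
  abel

include h1 h2 h3 h4 in
theorem cm_qq_of_even [NeZero N] (hN : Even N) {m k : ℕ} (hm : Odd m) (hmN : m ≤ N - 2)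
    (hk : Even k) (hkN : k < N) (i : ZMod N) : cm (e (i + k)) (qq e m i) = 0 := by
  rw [Nat.even_iff] at hN hk
  rw [Nat.odd_iff] at hm
  obtain rfl | hk' | hk' | hk' :
      k = 0 ∨ (2 ≤ k ∧ k + 3 ≤ m) ∨ k + 1 = m ∨ (m + 1 ≤ k ∧ k ≤ N - 2) := by
    omega
  · rw [Nat.cast_zero, add_zero, cm_qq_first e h1 h2 h4 (by omega) (by omega)]
  · exact cm_qq_inner e h1 h2 h3 h4 hk'.1 hk'.2 (by omega) i
  · exact cm_qq_last e h1 h3 h4 (by omega) hk' (by omega) i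
  · exact cm_eq_zero_of_commute (commute_apply_add_qq e h4 hk'.1 hk'.2 i)

include h1 h2 h3 h4 in
theorem cm_sum_parity_sum_parity [NeZero N] (hN : Even N) (b : ZMod 2) {m : ℕ} (hm : Odd m)
    (hmN : m ≤ N - 2) :
    cm (∑ x with parity hN x = b, e x) (∑ y with parity hN y = b, qq e m y) = 0 := by
  rw [cm_sum_sum]
  refine sum_eq_zero fun x hx => sum_eq_zero fun y hy => ?_
  rw [mem_filter_univ] at hx hy
  have hxy : x = y + ((x - y).val : ZMod N) := by rw [ZMod.natCast_zmod_val]; ring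
  have hk : Even (x - y).val := by
    rw [← parity_natCast_eq_zero_iff hN, ZMod.natCast_zmod_val, map_sub, hx, hy, sub_self]
  rw [hxy]
  exact cm_qq_of_even e h1 h2 h3 h4 hN hm hmN hk (ZMod.val_lt _) y

include h4 in
theorem cm_sum_parity_zero_sum_parity_one [NeZero N] (hN : Even N) (hN2 : 2 < N) :
    cm (∑ x with parity hN x = 0, e x) (∑ y with parity hN y = 1, e y) =
      ∑ x with parity hN x = 0, qq e 2 x - ∑ x with parity hN x = 1, qq e 2 x := by
  have hinner : ∀ x ∈ univ.filter (parity hN · = 0),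
      ∑ y with parity hN y = 1, cm (e x) (e y) = qq e 2 x - qq e 2 (x - 1) := by
    intro x hx
    rw [mem_filter_univ] at hx
    have hne : x + 1 ≠ x - 1 := fun h => by
      have h2 : ((2 : ℕ) : ZMod N) = 0 := by push_cast; linear_combination h
      exact absurd (Nat.le_of_dvd two_pos ((ZMod.natCast_eq_zero_iff 2 N).1 h2)) (by omega)
    rw [sum_eq_add_of_mem (x + 1) (x - 1) (by simp [hx]) (by simp [hx]) hne]
    · rw [qq_succ e one_ne_zero, qq_succ e one_ne_zero, qq_one, qq_one, sub_add_cancel,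
        cm_comm (e (x - 1)), ← sub_eq_add_neg]
    · rintro y hy ⟨hy1, hy2⟩
      rw [mem_filter_univ] at hy
      have hyx : y ≠ x := by rintro rfl; simp [hx] at hy
      exact cm_eq_zero_of_commute (h4 x y hy2 hyx hy1)
  rw [cm_sum_sum, sum_congr rfl hinner, sum_sub_distrib, sum_parity_sub, map_one]
  rfl

end Strings

end PeriodicTL

theorem stmt_7 {A : Type*} [NonUnitalRing A] (N : ℕ) (hN : 4 ≤ N) (hNe : Even N)
    (e : ZMod N → A)
    (h1 : ∀ i : ZMod N, e i * e i = 0)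
    (h2 : ∀ i : ZMod N, e i * e (i + 1) * e i = e i)
    (h3 : ∀ i : ZMod N, e (i + 1) * e i * e (i + 1) = e (i + 1))
    (h4 : ∀ i j : ZMod N, j ≠ i - 1 → j ≠ i → j ≠ i + 1 → e i * e j = e j * e i) :
    cm (qev e 1) (qod e 1) = qminus e 2 ∧
    (∀ s : ℕ, 1 ≤ s → 2 * s + 1 ≤ N - 1 →
      cm (qev e 1) (qplus e (2 * s)) = 0 ∧ cm (qod e 1) (qplus e (2 * s)) = 0) ∧
    (∀ s : ℕ, 2 * s + 2 ≤ N - 1 →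
      cm (qev e 1) (qev e (2 * s + 1)) = 0 ∧ cm (qod e 1) (qod e (2 * s + 1)) = 0) := by
  open PeriodicTL in
  have : NeZero N := ⟨by omega⟩
  rw [qminus_eq_qev_sub_qod]
  simp only [qev_eq_sum_parity e hNe, qod_eq_sum_parity e hNe, qq_one]
  refine ⟨cm_sum_parity_zero_sum_parity_one e h4 hNe (by omega), fun s hs hsN => ?_,
    fun s hsN => ?_⟩
  · have hm : Even (2 * s) := even_two_mul s
    exact ⟨cm_sum_parity_qplus e h1 h2 h3 h4 hNe 0 hm (by omega) (by omega),
      cm_sum_parity_qplus e h1 h2 h3 h4 hNe 1 hm (by omega) (by omega)⟩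
  · have hm : Odd (2 * s + 1) := odd_two_mul_add_one s
    exact ⟨cm_sum_parity_sum_parity e h1 h2 h3 h4 hNe 0 hm (by omega),
      cm_sum_parity_sum_parity e h1 h2 h3 h4 hNe 1 hm (by omega)⟩
end
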